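/- For every m ≥ 2 and path-connected metric spaces X and Y, max{dTC_m(X), dTC_m(Y)} ≤ dTC_m(X × Y). -/

import Mathlib

open MeasureTheory unitInterval

noncomputable section

/-- The path space `P(X) = C([0,1], X)` with the compact-open topology. -/
abbrev PathSp (X : Type*) [TopologicalSpace X] : Type _ := C(unitInterval, X)

/-- The space `B_n(Z)` of probability measures on a metric space `Z` supported on at most
`n` points, as a subspace of the space of probability measures with the Lévy–Prokhorov metric. -/
def Bmeas (n : ℕ) (Z : Type*) [MetricSpace Z] : Type _ :=
  letI : MeasurableSpace Z := borel Z
  {μ : LevyProkhorov (ProbabilityMeasure Z) //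
    ∃ S : Finset Z, S.card ≤ n ∧ (LevyProkhorov.toMeasureEquiv μ : ProbabilityMeasure Z) (↑S : Set Z) = 1}

noncomputable instance (n : ℕ) (Z : Type*) [MetricSpace Z] : TopologicalSpace (Bmeas n Z) :=
  letI : MeasurableSpace Z := borel Z
  haveI : BorelSpace Z := ⟨rfl⟩
  instTopologicalSpaceSubtype

/-- The underlying probability measure of an element of `B_n(Z)`. -/
def Bmeas.meas {n : ℕ} {Z : Type*} [MetricSpace Z] (μ : Bmeas n Z) :
    @ProbabilityMeasure Z (borel Z) :=
  LevyProkhorov.toMeasureEquiv μ.1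

/-- `μ ∈ B_n(Z)` is supported on the set `A`. -/
def DistributedOn {Z : Type*} [MetricSpace Z] {n : ℕ} (μ : Bmeas n Z) (A : Set Z) : Prop :=
  ∃ S : Finset Z, (↑S : Set Z) ⊆ A ∧ Bmeas.meas μ (↑S : Set Z) = 1

/-- The time points `t_j = j/(m-1)`, `j = 0, …, m-1`, in `[0,1]`. -/
def tpt (m : ℕ) (j : Fin m) : unitInterval :=
  Set.projIcc 0 1 zero_le_one ((j : ℝ) / ((m : ℝ) - 1))

/-- A `k`-distributed `m`-navigation algorithm on `X`. -/
def IsNavAlg (m k : ℕ) {X : Type*} [MetricSpace X]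
    (s : (Fin m → X) → Bmeas k (PathSp X)) : Prop :=
  Continuous s ∧ ∀ x : Fin m → X,
    DistributedOn (s x) {φ : PathSp X | ∀ j : Fin m, φ (tpt m j) = x j}

/-- The `m`-th sequential distributional topological complexity. -/
noncomputable def dTC (m : ℕ) (X : Type*) [MetricSpace X] : ℕ∞ :=
  sInf {c : ℕ∞ | ∃ k : ℕ, c = k ∧
    ∃ s : (Fin m → X) → Bmeas (k + 1) (PathSp X), IsNavAlg m (k + 1) s}

/-- A `k`-contraction of `Y` to the point `y₀`. -/
def IsContr (k : ℕ) {Y : Type*} [MetricSpace Y] (y₀ : Y)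
    (H : Y → Bmeas k (PathSp Y)) : Prop :=
  Continuous H ∧ ∀ y : Y,
    DistributedOn (H y) {φ : PathSp Y | φ 0 = y ∧ φ 1 = y₀}

/-- The distributional Lusternik–Schnirelmann category. -/
noncomputable def dcat (Y : Type*) [MetricSpace Y] : ℕ∞ :=
  sInf {c : ℕ∞ | ∃ k : ℕ, c = k ∧
    ∃ (y₀ : Y) (H : Y → Bmeas (k + 1) (PathSp Y)), IsContr (k + 1) y₀ H}

/-- The classical `m`-th sequential topological complexity. -/
noncomputable def TCcl (m : ℕ) (X : Type*) [TopologicalSpace X] : ℕ∞ :=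
  sInf {c : ℕ∞ | ∃ k : ℕ, c = k ∧
    ∃ (U : Fin (k + 1) → Set (Fin m → X)) (s : ∀ i : Fin (k + 1), C(U i, PathSp X)),
      (∀ i, IsOpen (U i)) ∧ (∀ x, ∃ i, x ∈ U i) ∧
      ∀ (i : Fin (k + 1)) (x : U i) (j : Fin m), (s i x) (tpt m j) = (x : Fin m → X) j}

/-!
Fixing `y₀ : Y`, the maps `x ↦ (x, y₀)` and `Prod.fst` exhibit `X` as a `1`-Lipschitz retract
of `X × Y`. Pushing the paths of a navigation algorithm on `X × Y` (evaluated at the included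
points) forward along the projection gives a navigation algorithm on `X` with no more paths, and
it is continuous because pushforward along a `1`-Lipschitz map does not increase the
Lévy–Prokhorov distance. Symmetrically for `Y`.
-/

open Metric

lemma LipschitzWith.levyProkhorovEDist_map_le {Z W : Type*} [PseudoMetricSpace Z]
    [PseudoMetricSpace W] [MeasurableSpace Z] [OpensMeasurableSpace Z] [MeasurableSpace W]
    [BorelSpace W] {f : Z → W} (hf : LipschitzWith 1 f) (μ ν : Measure Z) :
    levyProkhorovEDist (μ.map f) (ν.map f) ≤ levyProkhorovEDist μ ν := by
  have hfm : Measurable f := hf.continuous.measurable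
  have thickening_preimage_subset (ε : ℝ) (B : Set W) :
      thickening ε (f ⁻¹' B) ⊆ f ⁻¹' thickening ε B := by
    intro z hz
    obtain ⟨z', hz', hzz'⟩ := mem_thickening_iff.1 hz
    exact mem_thickening_iff.2
      ⟨f z', hz', lt_of_le_of_lt (by simpa using hf.dist_le_mul z z') hzz'⟩
  refine sInf_le_sInf fun ε hε B hB ↦ ?_
  obtain ⟨hμν, hνμ⟩ := hε (f ⁻¹' B) (hfm hB)
  simp only [Measure.map_apply hfm hB, Measure.map_apply hfm isOpen_thickening.measurableSet]
  exact ⟨hμν.trans (add_le_add_left (measure_mono (thickening_preimage_subset _ B)) ε),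
    hνμ.trans (add_le_add_left (measure_mono (thickening_preimage_subset _ B)) ε)⟩

lemma ContinuousMap.lipschitzWith_comp_left {α Z W : Type*} [TopologicalSpace α]
    [CompactSpace α] [PseudoMetricSpace Z] [PseudoMetricSpace W] {K : NNReal} (g : C(Z, W))
    (hg : LipschitzWith K g) : LipschitzWith K (g.comp : C(α, Z) → C(α, W)) :=
  LipschitzWith.of_dist_le_mul fun φ ψ ↦
    (ContinuousMap.dist_le (by positivity)).2 fun t ↦
      (hg.dist_le_mul (φ t) (ψ t)).trans (by gcongr; exact ContinuousMap.dist_apply_le_dist t)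

lemma ProbabilityMeasure.map_apply_image_eq_one {Z W : Type*} [MeasurableSpace Z]
    [MeasurableSpace W] {μ : ProbabilityMeasure Z} {f : Z → W} (hf : AEMeasurable f μ)
    {A : Set Z} (hA : μ A = 1) (hfA : MeasurableSet (f '' A)) :
    μ.map hf (f '' A) = 1 := by
  refine le_antisymm (ProbabilityMeasure.apply_le_one _ _) ?_
  rw [ProbabilityMeasure.map_apply _ hf hfA, ← hA]
  exact ProbabilityMeasure.apply_mono _ (Set.subset_preimage_image f A)

namespace Bmeas

variable {Z W : Type*} [MetricSpace Z] [MetricSpace W] {n : ℕ}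

def map (f : Z → W) (hf : Continuous f) (μ : Bmeas n Z) : Bmeas n W :=
  letI : MeasurableSpace Z := borel Z
  haveI : BorelSpace Z := ⟨rfl⟩
  letI : MeasurableSpace W := borel W
  haveI : BorelSpace W := ⟨rfl⟩
  ⟨LevyProkhorov.toMeasureEquiv.symm ((Bmeas.meas μ).map hf.measurable.aemeasurable), by
    classical
    obtain ⟨S, hcard, hS⟩ := μ.2
    refine ⟨S.image f, Finset.card_image_le.trans hcard, ?_⟩
    rw [Equiv.apply_symm_apply, Finset.coe_image]
    exact ProbabilityMeasure.map_apply_image_eq_one _ hS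
      (S.finite_toSet.image f).isClosed.measurableSet⟩

lemma meas_map (f : Z → W) (hf : Continuous f) (μ : Bmeas n Z) :
    letI : MeasurableSpace Z := borel Z
    haveI : BorelSpace Z := ⟨rfl⟩
    letI : MeasurableSpace W := borel W
    haveI : BorelSpace W := ⟨rfl⟩
    (μ.map f hf).meas = μ.meas.map hf.measurable.aemeasurable :=
  rfl

lemma continuous_map {f : Z → W} (hf : LipschitzWith 1 f) :
    Continuous (Bmeas.map (n := n) f hf.continuous) := by
  let _ : MeasurableSpace Z := borel Z
  have _ : BorelSpace Z := ⟨rfl⟩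
  let _ : MeasurableSpace W := borel W
  have _ : BorelSpace W := ⟨rfl⟩
  have hmap : LipschitzWith 1 fun μ : LevyProkhorov (ProbabilityMeasure Z) ↦
      (LevyProkhorov.toMeasureEquiv.symm ((LevyProkhorov.toMeasureEquiv μ).map
        hf.continuous.measurable.aemeasurable) : LevyProkhorov (ProbabilityMeasure W)) := by
    refine LipschitzWith.of_dist_le_mul fun μ ν ↦ ?_
    rw [NNReal.coe_one, one_mul, LevyProkhorov.dist_probabilityMeasure_def,
      LevyProkhorov.dist_probabilityMeasure_def]
    show levyProkhorovDist ((LevyProkhorov.toMeasureEquiv μ).map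
        hf.continuous.measurable.aemeasurable).toMeasure ((LevyProkhorov.toMeasureEquiv ν).map
        hf.continuous.measurable.aemeasurable).toMeasure ≤ _
    rw [ProbabilityMeasure.toMeasure_map, ProbabilityMeasure.toMeasure_map]
    exact ENNReal.toReal_mono (levyProkhorovEDist_ne_top _ _) (hf.levyProkhorovEDist_map_le _ _)
  exact (hmap.continuous.comp continuous_subtype_val).subtype_mk _

end Bmeas

lemma DistributedOn.mono {Z : Type*} [MetricSpace Z] {n : ℕ} {μ : Bmeas n Z} {A B : Set Z}
    (hμ : DistributedOn μ A) (hAB : A ⊆ B) : DistributedOn μ B :=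
  let ⟨S, hSA, hS⟩ := hμ
  ⟨S, hSA.trans hAB, hS⟩

lemma DistributedOn.map {Z W : Type*} [MetricSpace Z] [MetricSpace W] {n : ℕ}
    {μ : Bmeas n Z} {A : Set Z} (hμ : DistributedOn μ A) (f : Z → W) (hf : Continuous f) :
    DistributedOn (μ.map f hf) (f '' A) := by
  classical
  let _ : MeasurableSpace Z := borel Z
  have _ : BorelSpace Z := ⟨rfl⟩
  let _ : MeasurableSpace W := borel W
  have _ : BorelSpace W := ⟨rfl⟩
  obtain ⟨S, hSA, hS⟩ := hμ
  refine ⟨S.image f, by simpa using Set.image_mono hSA, ?_⟩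
  rw [Bmeas.meas_map, Finset.coe_image]
  exact ProbabilityMeasure.map_apply_image_eq_one _ hS
    (S.finite_toSet.image f).isClosed.measurableSet

section Retract

variable {Z W : Type*} [MetricSpace Z] [MetricSpace W] {m k : ℕ}

lemma IsNavAlg.retract {s : (Fin m → Z) → Bmeas k (PathSp Z)} (hs : IsNavAlg m k s)
    {e : C(W, Z)} {r : C(Z, W)} (hr : LipschitzWith 1 r) (hre : Function.LeftInverse r e) :
    IsNavAlg m k fun w ↦ (s (e ∘ w)).map r.comp (ContinuousMap.continuous_postcomp r) := by
  refine ⟨(Bmeas.continuous_map (r.lipschitzWith_comp_left hr)).comp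
    (hs.1.comp (continuous_pi fun j ↦ e.continuous.comp (continuous_apply j))), fun w ↦ ?_⟩
  refine ((hs.2 (e ∘ w)).map _ _).mono ?_
  rintro _ ⟨φ, hφ, rfl⟩ j
  simp [hφ j, hre (w j)]

lemma dTC_le_of_lipschitz_retraction (e : C(W, Z)) (r : C(Z, W)) (hr : LipschitzWith 1 r)
    (hre : Function.LeftInverse r e) : dTC m W ≤ dTC m Z :=
  sInf_le_sInf fun _ ⟨k, hc, _, hs⟩ ↦ ⟨k, hc, _, hs.retract hr hre⟩

end Retract

theorem max_dTC_le_dTC_prod_general (m : ℕ) (X Y : Type) [MetricSpace X] [MetricSpace Y]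
    [PathConnectedSpace X] [PathConnectedSpace Y] :
    max (dTC m X) (dTC m Y) ≤ dTC m (X × Y) := by
  obtain ⟨x₀⟩ : Nonempty X := PathConnectedSpace.nonempty
  obtain ⟨y₀⟩ : Nonempty Y := PathConnectedSpace.nonempty
  exact max_le
    (dTC_le_of_lipschitz_retraction ((ContinuousMap.id X).prodMk (.const X y₀)) .fst
      LipschitzWith.prod_fst fun _ ↦ rfl)
    (dTC_le_of_lipschitz_retraction ((ContinuousMap.const Y x₀).prodMk (.id Y)) .snd
      LipschitzWith.prod_snd fun _ ↦ rfl)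

/-- For every `m ≥ 2` and path-connected metric spaces `X`, `Y`,
`max (dTC_m X) (dTC_m Y) ≤ dTC_m (X × Y)`. -/
theorem max_dTC_le_dTC_prod (m : ℕ) (hm : 2 ≤ m) (X Y : Type) [MetricSpace X] [MetricSpace Y]
    [PathConnectedSpace X] [PathConnectedSpace Y] :
    max (dTC m X) (dTC m Y) ≤ dTC m (X × Y) :=
  max_dTC_le_dTC_prod_general m X Y
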